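/- Let t ≥ 1 and let X be a finite nonempty set of size n. Then the average over all tuples (f₁, …, f_t) of functions X → X of deg(f_t ∘ ⋯ ∘ f₁) equals (n^{t+1} − (n−1)^{t+1}) / n^t. -/
import Mathlib


open Finset

/-- The degree of noninvertibility of `f`. -/
noncomputable def deg {X Y : Type*} [Fintype X] [Fintype Y] [DecidableEq Y] (f : X → Y) : ℝ :=
  (1 / (Fintype.card X : ℝ)) *
    ∑ y : Y, ((Finset.univ.filter (fun x => f x = y)).card : ℝ) ^ 2

/-- The composition `f_t ∘ ⋯ ∘ f₁ : X → X` of a tuple of endofunctions. -/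
def chainComp {X : Type*} : ∀ t : ℕ, (Fin t → X → X) → X → X
  | 0, _ => id
  | t + 1, f => fun x => f ⟨t, Nat.lt_succ_self t⟩ (chainComp t (fun s => f s.castSucc) x)

section Aux

variable {X : Type*} [Fintype X] [DecidableEq X]

lemma aux_card_subtype {a b : X} (hab : a ≠ b) :
    Fintype.card {g : X → X // g a = g b} = Fintype.card X ^ (Fintype.card X - 1) := by
  have e : {g : X → X // g a = g b} ≃ ({x : X // x ≠ b} → X) :=
    { toFun := fun g x => g.1 x.1
      invFun := fun k => ⟨fun x => if hx : x = b then k ⟨a, hab⟩ else k ⟨x, hx⟩, by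
        simp [hab]⟩
      left_inv := fun g => by
        ext x
        by_cases hx : x = b
        · subst hx; simpa using g.2
        · simp [hx]
      right_inv := fun k => by
        ext x
        simp [x.2] }
  rw [Fintype.card_congr e, Fintype.card_fun]
  congr 1
  simp [Fintype.card_subtype_compl]

lemma aux_sum_eq {a b : X} (hab : a ≠ b) :
    ∑ h : X → X, (if h a = h b then (1 : ℝ) else 0)
      = (Fintype.card X : ℝ) ^ (Fintype.card X - 1) := by
  rw [Finset.sum_boole]
  rw [← Fintype.card_subtype, aux_card_subtype hab]
  push_cast
  ring

lemma aux_sum_ne {a b : X} (hab : a ≠ b) :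
    ∑ h : X → X, (if h a = h b then (0 : ℝ) else 1)
      = (Fintype.card X : ℝ) ^ Fintype.card X
        - (Fintype.card X : ℝ) ^ (Fintype.card X - 1) := by
  have h1 : ∀ h : X → X, (if h a = h b then (0 : ℝ) else 1)
      = 1 - (if h a = h b then (1 : ℝ) else 0) := by
    intro h; by_cases hc : h a = h b <;> simp [hc]
  simp only [h1]
  rw [Finset.sum_sub_distrib, aux_sum_eq hab, Finset.sum_const, Finset.card_univ]
  simp [Fintype.card_fun]

lemma chainComp_snoc {Y : Type*} (t : ℕ) (g : Fin t → Y → Y) (h : Y → Y) (x : Y) :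
    chainComp (t + 1) (Fin.snoc g h) x = h (chainComp t g x) := by
  have hg : (fun s : Fin t => (Fin.snoc g h : Fin (t + 1) → Y → Y) s.castSucc) = g := by
    funext s; simp
  show (Fin.snoc g h : Fin (t + 1) → Y → Y) (Fin.last t)
      (chainComp t (fun s => (Fin.snoc g h : Fin (t + 1) → Y → Y) s.castSucc) x) = _
  rw [hg, Fin.snoc_last]

lemma chain_sum_ne :
    ∀ (t : ℕ) (x1 x2 : X), x1 ≠ x2 →
      ∑ f : Fin t → X → X, (if chainComp t f x1 = chainComp t f x2 then (0 : ℝ) else 1)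
        = ((Fintype.card X : ℝ) ^ Fintype.card X
            - (Fintype.card X : ℝ) ^ (Fintype.card X - 1)) ^ t := by
  intro t
  induction t with
  | zero =>
    intro x1 x2 h
    simp [chainComp, h]
  | succ t ih =>
    intro x1 x2 h
    rw [← Equiv.sum_comp (Fin.snocEquiv (fun _ : Fin (t + 1) => X → X))
      (fun f => if chainComp (t + 1) f x1 = chainComp (t + 1) f x2 then (0 : ℝ) else 1)]
    have hc : ∀ (p : (X → X) × (Fin t → X → X)) (x : X),
        chainComp (t + 1) ((Fin.snocEquiv (fun _ : Fin (t + 1) => X → X)) p) x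
          = p.1 (chainComp t p.2 x) := fun p x => chainComp_snoc t p.2 p.1 x
    simp only [hc]
    rw [Fintype.sum_prod_type, Finset.sum_comm]
    have hinner : ∀ g : Fin t → X → X,
        ∑ hl : X → X, (if hl (chainComp t g x1) = hl (chainComp t g x2) then (0 : ℝ) else 1)
          = (if chainComp t g x1 = chainComp t g x2 then (0 : ℝ) else 1) *
              ((Fintype.card X : ℝ) ^ Fintype.card X
                - (Fintype.card X : ℝ) ^ (Fintype.card X - 1)) := by
      intro g
      by_cases hg : chainComp t g x1 = chainComp t g x2
      · simp [hg]
      · rw [aux_sum_ne hg, if_neg hg, one_mul]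
    simp only [hinner]
    rw [← Finset.sum_mul, ih x1 x2 h]
    ring

lemma deg_eq_pairs (g : X → X) :
    deg g = (1 / (Fintype.card X : ℝ)) *
      ∑ x1 : X, ∑ x2 : X, (if g x1 = g x2 then (1 : ℝ) else 0) := by
  unfold deg
  congr 1
  have h1 : ∀ y : X, ((Finset.univ.filter (fun x => g x = y)).card : ℝ)
      = ∑ x : X, (if g x = y then (1 : ℝ) else 0) := by
    intro y; rw [Finset.sum_boole]
  have h2 : ∀ x1 x2 : X,
      ∑ y : X, (if g x1 = y then (1 : ℝ) else 0) * (if g x2 = y then (1 : ℝ) else 0)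
        = if g x1 = g x2 then (1 : ℝ) else 0 := by
    intro x1 x2
    simp only [ite_mul, one_mul, zero_mul]
    rw [Finset.sum_ite_eq]
    simp [eq_comm]
  calc ∑ y : X, ((Finset.univ.filter (fun x => g x = y)).card : ℝ) ^ 2
      = ∑ y : X, ∑ x1 : X, ∑ x2 : X,
          (if g x1 = y then (1 : ℝ) else 0) * (if g x2 = y then (1 : ℝ) else 0) := by
        refine Finset.sum_congr rfl fun y _ => ?_
        rw [h1, sq, Finset.sum_mul_sum]
    _ = ∑ x1 : X, ∑ x2 : X, ∑ y : X,
          (if g x1 = y then (1 : ℝ) else 0) * (if g x2 = y then (1 : ℝ) else 0) := by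
        rw [Finset.sum_comm]
        exact Finset.sum_congr rfl fun x1 _ => Finset.sum_comm
    _ = ∑ x1 : X, ∑ x2 : X, (if g x1 = g x2 then (1 : ℝ) else 0) :=
        Finset.sum_congr rfl fun x1 _ => Finset.sum_congr rfl fun x2 _ => h2 x1 x2

end Aux

theorem average_deg_iterates (t : ℕ) (ht : 1 ≤ t) (X : Type*)
    [Fintype X] [DecidableEq X] [Nonempty X] (n : ℕ) (hn : Fintype.card X = n) :
    (∑ f : Fin t → X → X, deg (chainComp t f)) / (n : ℝ) ^ (t * n) =
      ((n : ℝ) ^ (t + 1) - ((n : ℝ) - 1) ^ (t + 1)) / (n : ℝ) ^ t := by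
  have hcard : 1 ≤ Fintype.card X := Fintype.card_pos
  obtain ⟨m, hm⟩ : ∃ m, n = m + 1 := ⟨n - 1, by omega⟩
  subst hm
  set A : ℝ := ((m + 1 : ℕ) : ℝ) with hA
  have hA0 : (0 : ℝ) < A := by
    rw [hA]; exact_mod_cast Nat.succ_pos m
  set C : ℝ := A ^ (m + 1) - A ^ m with hC
  -- collision-free count
  have key : ∀ x1 x2 : X, x1 ≠ x2 →
      ∑ f : Fin t → X → X, (if chainComp t f x1 = chainComp t f x2 then (0 : ℝ) else 1)
        = C ^ t := by
    intro x1 x2 h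
    rw [chain_sum_ne t x1 x2 h, hn]
    simp only [Nat.add_sub_cancel, hC, hA]
  have htot : ∑ _f : Fin t → X → X, (1 : ℝ) = (A ^ (m + 1)) ^ t := by
    rw [Finset.sum_const, Finset.card_univ]
    simp [Fintype.card_fun, hn, hA]
  have hS : ∀ x1 x2 : X,
      ∑ f : Fin t → X → X, (if chainComp t f x1 = chainComp t f x2 then (1 : ℝ) else 0)
        = ((A ^ (m + 1)) ^ t - C ^ t) + (if x1 = x2 then C ^ t else 0) := by
    intro x1 x2
    by_cases h : x1 = x2
    · subst h
      rw [if_pos rfl]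
      have h1 : (∑ f : Fin t → X → X,
          if chainComp t f x1 = chainComp t f x1 then (1 : ℝ) else 0)
            = ∑ _f : Fin t → X → X, (1 : ℝ) :=
        Finset.sum_congr rfl fun f _ => if_pos rfl
      rw [h1, htot]; ring
    · rw [if_neg h, add_zero]
      have h1 : ∀ f : Fin t → X → X,
          (if chainComp t f x1 = chainComp t f x2 then (1 : ℝ) else 0)
            = 1 - (if chainComp t f x1 = chainComp t f x2 then (0 : ℝ) else 1) := by
        intro f; by_cases hf : chainComp t f x1 = chainComp t f x2 <;> simp [hf]
      simp only [h1]
      rw [Finset.sum_sub_distrib, htot, key x1 x2 h]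
  have hsum : ∑ f : Fin t → X → X, deg (chainComp t f)
      = A * ((A ^ (m + 1)) ^ t - C ^ t) + C ^ t := by
    have hdeg : ∑ f : Fin t → X → X, deg (chainComp t f)
        = (1 / A) * ∑ f : Fin t → X → X, ∑ x1 : X, ∑ x2 : X,
            (if chainComp t f x1 = chainComp t f x2 then (1 : ℝ) else 0) := by
      rw [Finset.mul_sum]
      refine Finset.sum_congr rfl fun f _ => ?_
      rw [deg_eq_pairs, hn]
    rw [hdeg]
    have hswap : ∑ f : Fin t → X → X, ∑ x1 : X, ∑ x2 : X,
        (if chainComp t f x1 = chainComp t f x2 then (1 : ℝ) else 0)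
          = ∑ x1 : X, ∑ x2 : X, ∑ f : Fin t → X → X,
            (if chainComp t f x1 = chainComp t f x2 then (1 : ℝ) else 0) := by
      rw [Finset.sum_comm]
      exact Finset.sum_congr rfl fun x1 _ => Finset.sum_comm
    rw [hswap]
    have hx2 : ∀ x1 : X, ∑ x2 : X,
        (((A ^ (m + 1)) ^ t - C ^ t) + (if x1 = x2 then C ^ t else 0))
          = A * ((A ^ (m + 1)) ^ t - C ^ t) + C ^ t := by
      intro x1
      rw [Finset.sum_add_distrib, Finset.sum_const, Finset.card_univ, hn,
        Finset.sum_ite_eq, if_pos (Finset.mem_univ x1), nsmul_eq_mul]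
    have : ∑ x1 : X, ∑ x2 : X, ∑ f : Fin t → X → X,
        (if chainComp t f x1 = chainComp t f x2 then (1 : ℝ) else 0)
          = ∑ x1 : X, (A * ((A ^ (m + 1)) ^ t - C ^ t) + C ^ t) := by
      refine Finset.sum_congr rfl fun x1 _ => ?_
      rw [show ∑ x2 : X, ∑ f : Fin t → X → X,
          (if chainComp t f x1 = chainComp t f x2 then (1 : ℝ) else 0)
            = ∑ x2 : X, (((A ^ (m + 1)) ^ t - C ^ t) + (if x1 = x2 then C ^ t else 0)) from
        Finset.sum_congr rfl fun x2 _ => hS x1 x2]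
      exact hx2 x1
    rw [this, Finset.sum_const, Finset.card_univ, hn, nsmul_eq_mul]
    have hAA : ((m + 1 : ℕ) : ℝ) = A := rfl
    rw [hAA, one_div, inv_mul_cancel_left₀ (ne_of_gt hA0)]
  rw [hsum]
  -- final algebra
  have hexp : t * (m + 1) = (m + 1) * t := mul_comm _ _
  rw [hexp, pow_mul]
  rw [div_eq_div_iff (by positivity) (by positivity)]
  rw [hC, show A ^ (m + 1) = A ^ m * A from pow_succ A m,
    show A ^ m * A - A ^ m = A ^ m * (A - 1) from by ring,
    mul_pow (A ^ m) A t, mul_pow (A ^ m) (A - 1) t,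
    pow_succ A t, pow_succ (A - 1) t]
  ring
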